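/- arXiv:2011.01505 — 3 statements merged into one kernel-verified Lean document; each statement's English description precedes it below -/
import Mathlib

section
/- Let D be the closed unit disk in ℝ², and let H₁, …, H_m (m ≥ 1) be open Euclidean disks whose closures are pairwise disjoint and contained in the open unit disk. Set Ω = D \ (H₁ ∪ … ∪ H_m). Then there exists a continuous map r : Ω → ∂H₁ (the boundary circle of H₁) such that r(x) = x for every x ∈ ∂H₁; that is, Ω admits a retraction onto the boundary circle of the first hole. -/
open Metric Set

/-! Radial projection from the centre of the first hole retracts the punctured plane onto the
boundary circle of that hole, and `Ω` does not contain the centre. -/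

section RadialProjection

variable {E : Type*} [NormedAddCommGroup E] [NormedSpace ℝ E]

/-- At `x = c` this is `c`, since `r / 0 = 0`. -/
noncomputable def radialProjection (c : E) (r : ℝ) (x : E) : E :=
  c + (r / ‖x - c‖) • (x - c)

theorem continuousOn_radialProjection (c : E) (r : ℝ) :
    ContinuousOn (radialProjection c r) {c}ᶜ := by
  have hsub : ContinuousOn (fun x : E => x - c) {c}ᶜ := continuousOn_id.sub continuousOn_const
  refine continuousOn_const.add ((continuousOn_const.div hsub.norm fun x hx => ?_).smul hsub)
  exact norm_ne_zero_iff.mpr (sub_ne_zero.mpr hx)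

theorem radialProjection_mem_sphere {c x : E} {r : ℝ} (hr : 0 ≤ r) (hx : x ≠ c) :
    radialProjection c r x ∈ sphere c r := by
  have hpos : 0 < ‖x - c‖ := norm_pos_iff.mpr (sub_ne_zero.mpr hx)
  rw [mem_sphere, dist_eq_norm, radialProjection, add_sub_cancel_left, norm_smul,
    Real.norm_of_nonneg (div_nonneg hr hpos.le), div_mul_cancel₀ _ hpos.ne']

theorem radialProjection_eq_self {c x : E} {r : ℝ} (hx : x ∈ sphere c r) :
    radialProjection c r x = x := by
  rw [mem_sphere, dist_eq_norm] at hx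
  rcases eq_or_ne r 0 with rfl | hr
  · rw [norm_eq_zero, sub_eq_zero] at hx
    simp [radialProjection, hx]
  · rw [radialProjection, hx, div_self hr, one_smul, add_sub_cancel]

end RadialProjection

theorem retraction_of_holed_disk_onto_first_hole_boundary_general
    (m : ℕ) (hm : 0 < m)
    (c : Fin m → EuclideanSpace ℝ (Fin 2)) (ρ : Fin m → ℝ)
    (hρ : ∀ i, 0 < ρ i)
    (Ω : Set (EuclideanSpace ℝ (Fin 2)))
    (hΩ : Ω = closedBall (0 : EuclideanSpace ℝ (Fin 2)) 1 \ ⋃ i, ball (c i) (ρ i)) :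
    ∃ r : EuclideanSpace ℝ (Fin 2) → EuclideanSpace ℝ (Fin 2),
      ContinuousOn r Ω ∧
      r '' Ω ⊆ frontier (ball (c ⟨0, hm⟩) (ρ ⟨0, hm⟩)) ∧
      ∀ x ∈ frontier (ball (c ⟨0, hm⟩) (ρ ⟨0, hm⟩)), r x = x := by
  set i₀ : Fin m := ⟨0, hm⟩
  have hρ₀ : 0 < ρ i₀ := hρ i₀
  have hΩ_ne_centre : Ω ⊆ {c i₀}ᶜ := by
    rintro x hx rfl
    rw [hΩ] at hx
    exact hx.2 (mem_iUnion.mpr ⟨i₀, mem_ball_self hρ₀⟩)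
  rw [frontier_ball _ hρ₀.ne']
  refine ⟨radialProjection (c i₀) (ρ i₀),
    (continuousOn_radialProjection _ _).mono hΩ_ne_centre, ?_,
    fun x hx => radialProjection_eq_self hx⟩
  rintro _ ⟨x, hx, rfl⟩
  exact radialProjection_mem_sphere hρ₀.le (hΩ_ne_centre hx)

/-- The closed unit disk in `ℝ²` with `m ≥ 1` open holes (open disks whose
closures are pairwise disjoint and contained in the open unit disk) removed retracts onto
the boundary circle of the first hole. -/
theorem retraction_of_holed_disk_onto_first_hole_boundary
    (m : ℕ) (hm : 0 < m)
    (c : Fin m → EuclideanSpace ℝ (Fin 2)) (ρ : Fin m → ℝ)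
    (hρ : ∀ i, 0 < ρ i)
    (hsub : ∀ i, closure (ball (c i) (ρ i)) ⊆ ball (0 : EuclideanSpace ℝ (Fin 2)) 1)
    (hdisj : ∀ i j, i ≠ j →
      Disjoint (closure (ball (c i) (ρ i))) (closure (ball (c j) (ρ j))))
    (Ω : Set (EuclideanSpace ℝ (Fin 2)))
    (hΩ : Ω = closedBall (0 : EuclideanSpace ℝ (Fin 2)) 1 \ ⋃ i, ball (c i) (ρ i)) :
    ∃ r : EuclideanSpace ℝ (Fin 2) → EuclideanSpace ℝ (Fin 2),
      ContinuousOn r Ω ∧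
      r '' Ω ⊆ frontier (ball (c ⟨0, hm⟩) (ρ ⟨0, hm⟩)) ∧
      ∀ x ∈ frontier (ball (c ⟨0, hm⟩) (ρ ⟨0, hm⟩)), r x = x :=
  retraction_of_holed_disk_onto_first_hole_boundary_general m hm c ρ hρ Ω hΩ
end

section
/- Let R > 0, let K : ℝ² → ℝ be continuous and strictly positive on the closed ball B̄_R(0), let k ≥ 1, let q₁, …, q_k lie in the open ball B_R(0), and let t₁, …, t_k ≥ 0 with Σ_{i=1}^k t_i = 1. For Λ > 0 let ν_Λ be the probability measure on B̄_R(0) obtained by normalizing the measure with density y ↦ K(y) Σ_{i=1}^k t_i Λ² / (1 + Λ²|y − q_i|²)² with respect to Lebesgue measure restricted to B̄_R(0). Then, as Λ → +∞, ν_Λ converges weakly to ( Σ_{i=1}^k t_i K(q_i) δ_{q_i} ) / ( Σ_{j=1}^k t_j K(q_j) ). -/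
/-!
Substituting `y = q + Λ⁻¹ • z` turns the bubble `Λ² / (1 + Λ² ‖y - q‖²)²` into `Λ²` times the
fixed integrable profile `(1 + ‖z‖²)⁻²`, and in dimension two the Jacobian `Λ⁻²` cancels that
factor. So each bubble is an approximate identity of total mass `C = ∫ (1 + ‖z‖²)⁻²`
concentrating at its centre, the numerator and denominator of `∫ g ∂ν_Λ` tend to
`C ∑ tᵢ K(qᵢ) g(qᵢ)` and `C ∑ tⱼ K(qⱼ)`, and `C` cancels.
-/

open MeasureTheory Filter Topology Metric Real
open scoped BoundedContinuousFunction ENNReal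
open Module Bornology

section Bubble

variable {E : Type*} [NormedAddCommGroup E]

/-- `bubble Λ q = exp ∘ φ_{Λ,q}`. -/
noncomputable def bubble (Λ : ℝ) (q y : E) : ℝ := Λ ^ 2 / (1 + Λ ^ 2 * ‖y - q‖ ^ 2) ^ 2

lemma bubble_nonneg (Λ : ℝ) (q y : E) : 0 ≤ bubble Λ q y := by
  unfold bubble; positivity

lemma bubble_le_sq (Λ : ℝ) (q y : E) : bubble Λ q y ≤ Λ ^ 2 := by
  unfold bubble
  exact div_le_self (by positivity) (one_le_pow₀ (le_add_of_nonneg_right (by positivity)))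

lemma continuous_bubble (Λ : ℝ) (q : E) : Continuous (bubble Λ q) :=
  continuous_const.div (by fun_prop) fun y => by positivity

lemma bubble_one_zero (y : E) : bubble 1 0 y = ((1 + ‖y‖ ^ 2) ^ 2)⁻¹ := by
  simp [bubble]

lemma tendsto_norm_sq_mul_bubble_one_zero :
    Tendsto (fun y : E => ‖y‖ ^ 2 * bubble 1 0 y) (cobounded E) (𝓝 0) := by
  have hinv : Tendsto (fun r : ℝ => (1 + r ^ 2)⁻¹) atTop (𝓝 0) :=
    tendsto_inv_atTop_zero.comp
      (tendsto_atTop_add_const_left _ _ (tendsto_pow_atTop two_ne_zero))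
  refine squeeze_zero (fun y => mul_nonneg (by positivity) (bubble_nonneg 1 0 y)) (fun y => ?_)
    (hinv.comp tendsto_norm_cobounded_atTop)
  have hy : 0 ≤ ‖y‖ ^ 2 := by positivity
  rw [bubble_one_zero, Function.comp_apply, ← div_eq_mul_inv, inv_eq_one_div,
    div_le_div_iff₀ (by positivity) (by positivity)]
  nlinarith

variable [NormedSpace ℝ E]

lemma bubble_eq_sq_mul_bubble_one_zero (Λ : ℝ) (q y : E) :
    bubble Λ q y = Λ ^ 2 * bubble 1 0 (Λ • (q - y)) := by
  rw [bubble_one_zero, norm_smul, norm_sub_rev, mul_pow, Real.norm_eq_abs, sq_abs, bubble,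
    div_eq_mul_inv]

variable [FiniteDimensional ℝ E] [MeasurableSpace E] [BorelSpace E]
  (μ : Measure E) [μ.IsAddHaarMeasure]

lemma integrable_bubble_one_zero (hE : finrank ℝ E < 4) : Integrable (bubble 1 0) μ := by
  have h := integrable_rpow_neg_one_add_norm_sq (μ := μ) (r := 4) (by exact_mod_cast hE)
  refine h.congr (ae_of_all _ fun y => ?_)
  dsimp only
  rw [bubble_one_zero, show -(4 : ℝ) / 2 = -(2 : ℕ) by norm_num, Real.rpow_neg (by positivity),
    Real.rpow_natCast]

noncomputable def bubbleMass : ℝ := ∫ y, bubble 1 0 y ∂μ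

lemma bubbleMass_pos (hE : finrank ℝ E < 4) : 0 < bubbleMass μ := by
  rw [bubbleMass, integral_pos_iff_support_of_nonneg (bubble_nonneg 1 0)
    (integrable_bubble_one_zero μ hE)]
  have hsupp : Function.support (bubble 1 (0 : E)) = Set.univ :=
    Set.eq_univ_of_forall fun y => ne_of_gt (by rw [bubble_one_zero]; positivity)
  rw [hsupp]
  exact isOpen_univ.measure_pos μ Set.univ_nonempty

theorem tendsto_integral_bubble_mul (hE : finrank ℝ E = 2) {f : E → ℝ} (hf : Integrable f μ)
    {q : E} (hfq : ContinuousAt f q) :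
    Tendsto (fun Λ => ∫ y, bubble Λ q y * f y ∂μ) atTop (𝓝 (bubbleMass μ * f q)) := by
  have hM := bubbleMass_pos μ (by omega)
  have hdecay := (tendsto_norm_sq_mul_bubble_one_zero (E := E)).const_mul (bubbleMass μ)⁻¹
  rw [mul_zero] at hdecay
  have h := tendsto_integral_comp_smul_smul_of_integrable' (μ := μ)
    (φ := fun y => (bubbleMass μ)⁻¹ * bubble 1 0 y)
    (fun y => mul_nonneg (by positivity) (bubble_nonneg 1 0 y))
    (by rw [integral_const_mul, ← bubbleMass, inv_mul_cancel₀ hM.ne'])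
    (by simpa only [hE, mul_left_comm] using hdecay) hf hfq
  refine (h.const_mul (bubbleMass μ)).congr fun Λ => ?_
  rw [← integral_const_mul]
  congr 1 with y
  rw [hE, bubble_eq_sq_mul_bubble_one_zero Λ q y, smul_eq_mul]
  field_simp

theorem tendsto_setIntegral_bubble_mul (hE : finrank ℝ E = 2) {s : Set E} (hs : MeasurableSet s)
    {f : E → ℝ} (hf : IntegrableOn f s μ) {q : E} (hsq : s ∈ 𝓝 q) (hfq : ContinuousAt f q) :
    Tendsto (fun Λ => ∫ y in s, bubble Λ q y * f y ∂μ) atTop (𝓝 (bubbleMass μ * f q)) := by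
  have hfq' : ContinuousAt (s.indicator f) q :=
    hfq.congr (by filter_upwards [hsq] with y hy; rw [Set.indicator_of_mem hy])
  have h := tendsto_integral_bubble_mul μ hE (hf.integrable_indicator hs) hfq'
  rw [Set.indicator_of_mem (mem_of_mem_nhds hsq)] at h
  refine h.congr fun Λ => ?_
  simp only [← Set.indicator_mul_right, integral_indicator hs]

theorem tendsto_setIntegral_mul_sum_bubble (hE : finrank ℝ E = 2) {s : Set E}
    (hs : MeasurableSet s) {f : E → ℝ} (hf : IntegrableOn f s μ) {ι : Type*} [Fintype ι]
    (t : ι → ℝ) (q : ι → E) (hsq : ∀ i, s ∈ 𝓝 (q i)) (hfq : ∀ i, ContinuousAt f (q i)) :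
    Tendsto (fun Λ => ∫ y in s, f y * ∑ i, t i * bubble Λ (q i) y ∂μ) atTop
      (𝓝 (bubbleMass μ * ∑ i, t i * f (q i))) := by
  have hint : ∀ Λ i, IntegrableOn (fun y => bubble Λ (q i) y * f y) s μ := fun Λ i =>
    hf.bdd_mul (continuous_bubble Λ (q i)).aestronglyMeasurable (ae_of_all _ fun y => by
      rw [Real.norm_of_nonneg (bubble_nonneg _ _ _)]; exact bubble_le_sq _ _ _)
  have h := tendsto_finsetSum Finset.univ fun i _ =>
    (tendsto_setIntegral_bubble_mul μ hE hs hf (hsq i) (hfq i)).const_mul (t i)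
  rw [Finset.mul_sum]
  simp_rw [mul_left_comm (bubbleMass μ)]
  refine h.congr fun Λ => ?_
  simp_rw [← integral_const_mul]
  rw [← integral_finsetSum _ fun i _ => (hint Λ i).const_mul (t i)]
  refine integral_congr_ae (ae_of_all _ fun y => ?_)
  dsimp only
  rw [Finset.mul_sum]
  exact Finset.sum_congr rfl fun i _ => by ring

end Bubble

theorem integral_normalized_withDensity_ofReal {X : Type*} [MeasurableSpace X] {μ : Measure X}
    {ρ : X → ℝ} (hρ : Integrable ρ μ) (hρ0 : 0 ≤ᵐ[μ] ρ) (g : X → ℝ) :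
    ∫ x, g x ∂(((μ.withDensity fun x => ENNReal.ofReal (ρ x)) Set.univ)⁻¹ •
        μ.withDensity fun x => ENNReal.ofReal (ρ x)) =
      (∫ x, ρ x * g x ∂μ) / ∫ x, ρ x ∂μ := by
  rw [integral_smul_measure, withDensity_apply _ MeasurableSet.univ, Measure.restrict_univ,
    ← ofReal_integral_eq_lintegral_ofReal hρ hρ0, ENNReal.toReal_inv,
    ENNReal.toReal_ofReal (integral_nonneg_of_ae hρ0),
    integral_withDensity_eq_integral_toReal_smul₀ hρ.aemeasurable.ennreal_ofReal
      (ae_of_all _ fun _ => ENNReal.ofReal_lt_top), smul_eq_mul, div_eq_inv_mul]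
  congr 1
  refine integral_congr_ae ?_
  filter_upwards [hρ0] with x hx
  rw [ENNReal.toReal_ofReal hx, smul_eq_mul]

theorem weighted_bubble_combination_weak_convergence_general
    (R : ℝ)
    (K : EuclideanSpace ℝ (Fin 2) → ℝ) (hKcont : Continuous K)
    (hKpos : ∀ y ∈ closedBall (0 : EuclideanSpace ℝ (Fin 2)) R, 0 < K y)
    (k : ℕ)
    (q : Fin k → EuclideanSpace ℝ (Fin 2))
    (hq : ∀ i, q i ∈ ball (0 : EuclideanSpace ℝ (Fin 2)) R)
    (t : Fin k → ℝ) (ht : ∀ i, 0 ≤ t i) (hsum : ∑ i, t i = 1)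
    (m : ℝ → Measure (EuclideanSpace ℝ (Fin 2)))
    (hm : ∀ Λ, m Λ =
      ((volume : Measure (EuclideanSpace ℝ (Fin 2))).restrict
          (closedBall (0 : EuclideanSpace ℝ (Fin 2)) R)).withDensity
        (fun y => ENNReal.ofReal
          (K y * ∑ i, t i * (Λ ^ 2 / (1 + Λ ^ 2 * ‖y - q i‖ ^ 2) ^ 2))))
    (ν : ℝ → Measure (EuclideanSpace ℝ (Fin 2)))
    (hν : ∀ Λ, ν Λ = ((m Λ) Set.univ)⁻¹ • m Λ) :
    ∀ g : EuclideanSpace ℝ (Fin 2) →ᵇ ℝ,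
      Tendsto (fun Λ : ℝ => ∫ y, g y ∂(ν Λ)) atTop
        (𝓝 ((∑ i, t i * K (q i) * g (q i)) / (∑ j, t j * K (q j)))) := by
  intro g
  have hE : finrank ℝ (EuclideanSpace ℝ (Fin 2)) = 2 := finrank_euclideanSpace_fin
  have hB : ∀ i, closedBall (0 : EuclideanSpace ℝ (Fin 2)) R ∈ 𝓝 (q i) := fun i =>
    mem_of_superset (isOpen_ball.mem_nhds (hq i)) ball_subset_closedBall
  have hKq : ∀ i, 0 < K (q i) := fun i => hKpos _ (ball_subset_closedBall (hq i))
  have hS : 0 < ∑ j, t j * K (q j) := by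
    obtain ⟨i, -, hi⟩ := Finset.exists_ne_zero_of_sum_ne_zero (hsum ▸ one_ne_zero)
    exact Finset.sum_pos' (fun j _ => mul_nonneg (ht j) (hKq j).le)
      ⟨i, Finset.mem_univ i, mul_pos ((ht i).lt_of_ne' hi) (hKq i)⟩
  have hnum := tendsto_setIntegral_mul_sum_bubble volume hE measurableSet_closedBall
    (f := fun y => K y * g y)
    ((hKcont.mul g.continuous).continuousOn.integrableOn_compact (isCompact_closedBall _ _))
    t q hB fun _ => (hKcont.mul g.continuous).continuousAt
  have hden := tendsto_setIntegral_mul_sum_bubble volume hE measurableSet_closedBall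
    (hKcont.continuousOn.integrableOn_compact (isCompact_closedBall _ _))
    t q hB fun _ => hKcont.continuousAt
  have hM := bubbleMass_pos (volume : Measure (EuclideanSpace ℝ (Fin 2))) (by omega)
  simp_rw [mul_assoc]
  rw [← mul_div_mul_left _ _ hM.ne']
  refine (hnum.div hden (mul_pos hM hS).ne').congr fun Λ => ?_
  have hρ : Continuous fun y => K y * ∑ i, t i * bubble Λ (q i) y :=
    hKcont.mul (continuous_finsetSum _ fun i _ => continuous_const.mul (continuous_bubble _ _))
  have hρ0 : 0 ≤ᵐ[volume.restrict (closedBall 0 R)] fun y => K y * ∑ i, t i * bubble Λ (q i) y :=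
    (ae_restrict_iff' measurableSet_closedBall).2 (ae_of_all _ fun y hy =>
      mul_nonneg (hKpos y hy).le
        (Finset.sum_nonneg fun i _ => mul_nonneg (ht i) (bubble_nonneg _ _ _)))
  rw [hν, hm]
  refine Eq.symm ((integral_normalized_withDensity_ofReal
    (hρ.continuousOn.integrableOn_compact (isCompact_closedBall _ _)) hρ0 g).trans ?_)
  congr 1
  exact integral_congr_ae (ae_of_all _ fun y => mul_right_comm _ _ _)

/-- Let `K` be continuous and positive on the closed ball `B̄_R(0) ⊆ ℝ²`,
and let `q₁,…,q_k ∈ B_R(0)`, `tᵢ ≥ 0`, `Σ tᵢ = 1`. The probability measures obtained by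
normalizing the densities `y ↦ K(y) Σᵢ tᵢ Λ²/(1+Λ²|y−qᵢ|²)²` on `B̄_R(0)` converge
weakly, as `Λ → +∞`, to `(Σᵢ tᵢ K(qᵢ) δ_{qᵢ}) / (Σⱼ tⱼ K(qⱼ))`. -/
theorem weighted_bubble_combination_weak_convergence
    (R : ℝ) (hR : 0 < R)
    (K : EuclideanSpace ℝ (Fin 2) → ℝ) (hKcont : Continuous K)
    (hKpos : ∀ y ∈ closedBall (0 : EuclideanSpace ℝ (Fin 2)) R, 0 < K y)
    (k : ℕ) (hk : 1 ≤ k)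
    (q : Fin k → EuclideanSpace ℝ (Fin 2))
    (hq : ∀ i, q i ∈ ball (0 : EuclideanSpace ℝ (Fin 2)) R)
    (t : Fin k → ℝ) (ht : ∀ i, 0 ≤ t i) (hsum : ∑ i, t i = 1)
    (m : ℝ → Measure (EuclideanSpace ℝ (Fin 2)))
    (hm : ∀ Λ, m Λ =
      ((volume : Measure (EuclideanSpace ℝ (Fin 2))).restrict
          (closedBall (0 : EuclideanSpace ℝ (Fin 2)) R)).withDensity
        (fun y => ENNReal.ofReal
          (K y * ∑ i, t i * (Λ ^ 2 / (1 + Λ ^ 2 * ‖y - q i‖ ^ 2) ^ 2))))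
    (ν : ℝ → Measure (EuclideanSpace ℝ (Fin 2)))
    (hν : ∀ Λ, ν Λ = ((m Λ) Set.univ)⁻¹ • m Λ) :
    ∀ g : EuclideanSpace ℝ (Fin 2) →ᵇ ℝ,
      Tendsto (fun Λ : ℝ => ∫ y, g y ∂(ν Λ)) atTop
        (𝓝 ((∑ i, t i * K (q i) * g (q i)) / (∑ j, t j * K (q j)))) :=
  weighted_bubble_combination_weak_convergence_general R K hKcont hKpos k q hq t ht hsum m hm ν hν
end

section
/- Let X be a compact metric space, k ≥ 1 an integer, and ε, r > 0. Then there exists δ > 0, depending only on X, k, ε, r, with the following property: for every Borel probability measure μ on X such that μ( ⋃_{i=1}^k B_r(x_i) ) ≤ 1 − ε for every choice of k points x₁, …, x_k ∈ X, there exist k+1 Borel sets Ω₁, …, Ω_{k+1} ⊆ X such that dist(Ω_i, Ω_j) := inf{ d(x,y) : x ∈ Ω_i, y ∈ Ω_j } ≥ 2δ for all i ≠ j, and μ(Ω_j) ≥ δ for every j = 1, …, k+1. -/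
open MeasureTheory Metric Set
open scoped ENNReal

/-- Covering lemma for non-concentrated probability measures: on a compact
metric space `X`, given `k ≥ 1` and `ε, r > 0`, there is a `δ > 0` such that any Borel
probability measure `μ` with `μ(⋃ᵢ B_r(xᵢ)) ≤ 1 − ε` for every choice of `k` points
`x₁,…,x_k` admits `k+1` Borel sets `Ω₁,…,Ω_{k+1}` that are pairwise at distance at least
`2δ` and each of `μ`-measure at least `δ`. -/
theorem covering_lemma_nonconcentrated_measures
    (X : Type*) [MetricSpace X] [CompactSpace X]
    [MeasurableSpace X] [BorelSpace X]
    (k : ℕ) (hk : 1 ≤ k) (ε r : ℝ) (hε : 0 < ε) (hr : 0 < r) :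
    ∃ δ : ℝ, 0 < δ ∧
      ∀ μ : Measure X, IsProbabilityMeasure μ →
        (∀ x : Fin k → X, μ (⋃ i, ball (x i) r) ≤ ENNReal.ofReal (1 - ε)) →
        ∃ Ω : Fin (k + 1) → Set X,
          (∀ j, MeasurableSet (Ω j)) ∧
          (∀ i j, i ≠ j → ∀ x ∈ Ω i, ∀ y ∈ Ω j, 2 * δ ≤ dist x y) ∧
          (∀ j, ENNReal.ofReal δ ≤ μ (Ω j)) := by
  rcases isEmpty_or_nonempty X with hX | hX
  · refine ⟨1, one_pos, fun μ hμ _ => absurd (measure_univ (μ := μ)) ?_⟩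
    rw [Set.univ_eq_empty_iff.mpr hX]
    simp
  inhabit X
  obtain ⟨t, -, htf, htcov⟩ :=
    finite_cover_balls_of_compact (isCompact_univ (X := X)) (e := r / 4) (by positivity)
  set F : Finset X := htf.toFinset with hF
  have hcov : ∀ p : X, ∃ w ∈ F, dist p w < r / 4 := by
    intro p
    have := htcov (mem_univ p)
    simp only [mem_iUnion, exists_prop] at this
    obtain ⟨w, hwt, hw⟩ := this
    exact ⟨w, htf.mem_toFinset.mpr hwt, hw⟩
  have hFne : F.Nonempty := by
    obtain ⟨w, hw, -⟩ := hcov default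
    exact ⟨w, hw⟩
  set N : ℝ := (F.card : ℝ) with hN
  have hNpos : 0 < N := by
    rw [hN]; exact_mod_cast Finset.card_pos.mpr hFne
  set ε' : ℝ := min ε 1 with hε'
  have hε'pos : 0 < ε' := lt_min hε one_pos
  have hε'le1 : ε' ≤ 1 := min_le_right _ _
  have hε'leε : ε' ≤ ε := min_le_left _ _
  set δ : ℝ := min (ε' / N) (r / 8) with hδ
  have hδpos : 0 < δ := lt_min (div_pos hε'pos hNpos) (by positivity)
  refine ⟨δ, hδpos, ?_⟩
  intro μ hμ hcon
  -- main inductive construction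
  have main : ∀ j : ℕ, j ≤ k + 1 → ∃ z : ℕ → X,
      (∀ i i', i < j → i' < j → i ≠ i' → r / 4 * 3 ≤ dist (z i) (z i')) ∧
      (∀ i, i < j → ENNReal.ofReal (ε' / N) ≤ μ (ball (z i) (r / 4))) := by
    intro j
    induction j with
    | zero =>
      exact fun _ => ⟨fun _ => default, fun i i' hi => absurd hi (Nat.not_lt_zero i),
        fun i hi => absurd hi (Nat.not_lt_zero i)⟩
    | succ j ih =>
      intro hj
      obtain ⟨z, hsep, hmass⟩ := ih (by omega)
      have hjk : j ≤ k := by omega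
      set x : Fin k → X := fun i => if (i : ℕ) < j then z i else default with hx
      set U : Set X := ⋃ i, ball (x i) r with hU
      have hUopen : IsOpen U := isOpen_iUnion fun i => isOpen_ball
      have hμU : μ U ≤ ENNReal.ofReal (1 - ε') :=
        le_trans (hcon x) (ENNReal.ofReal_le_ofReal (by linarith))
      have hcomp : ENNReal.ofReal ε' ≤ μ Uᶜ := by
        rw [prob_compl_eq_one_sub hUopen.measurableSet]
        calc ENNReal.ofReal ε'
            = (ENNReal.ofReal ε' + ENNReal.ofReal (1 - ε')) - ENNReal.ofReal (1 - ε') :=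
              (ENNReal.add_sub_cancel_right ENNReal.ofReal_ne_top).symm
          _ = 1 - ENNReal.ofReal (1 - ε') := by
              rw [← ENNReal.ofReal_add hε'pos.le (by linarith)]
              norm_num
          _ ≤ 1 - μ U := tsub_le_tsub_left hμU 1
      have hsub : Uᶜ ⊆ ⋃ w ∈ F, (ball w (r / 4) ∩ Uᶜ) := by
        intro p hp
        obtain ⟨w, hwF, hw⟩ := hcov p
        exact mem_iUnion₂.mpr ⟨w, hwF, mem_ball.mpr hw, hp⟩
      have hsum : μ Uᶜ ≤ ∑ w ∈ F, μ (ball w (r / 4) ∩ Uᶜ) :=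
        le_trans (measure_mono hsub) (measure_biUnion_finset_le F _)
      have hconstsum : ∑ _w ∈ F, ENNReal.ofReal (ε' / N) = ENNReal.ofReal ε' := by
        rw [Finset.sum_const, nsmul_eq_mul]
        rw [show ((F.card : ℝ≥0∞)) = ENNReal.ofReal N by
          rw [hN]; exact (ENNReal.ofReal_natCast _).symm]
        rw [← ENNReal.ofReal_mul hNpos.le, mul_div_cancel₀ _ hNpos.ne']
      have hex : ∃ w ∈ F, ENNReal.ofReal (ε' / N) ≤ μ (ball w (r / 4) ∩ Uᶜ) := by
        by_contra hcontra
        push_neg at hcontra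
        have hlt : ∑ w ∈ F, μ (ball w (r / 4) ∩ Uᶜ) < ∑ _w ∈ F, ENNReal.ofReal (ε' / N) :=
          ENNReal.sum_lt_sum_of_nonempty hFne hcontra
        rw [hconstsum] at hlt
        exact absurd (le_trans hcomp hsum) (not_le.mpr hlt)
      obtain ⟨w, hwF, hw⟩ := hex
      have hne : (ball w (r / 4) ∩ Uᶜ).Nonempty := by
        apply nonempty_of_measure_ne_zero (μ := μ)
        intro h0
        rw [h0] at hw
        exact absurd hw (not_le.mpr (ENNReal.ofReal_pos.mpr (div_pos hε'pos hNpos)))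
      obtain ⟨p, hpball, hpU⟩ := hne
      have hkey : ∀ i, i < j → r / 4 * 3 ≤ dist w (z i) := by
        intro i hi
        have hik : i < k := lt_of_lt_of_le hi hjk
        have hnotin : p ∉ ball (x ⟨i, hik⟩) r := fun h => hpU (mem_iUnion.mpr ⟨_, h⟩)
        have hxz : x ⟨i, hik⟩ = z i := by simp [hx, hi]
        rw [hxz] at hnotin
        have h1 : r ≤ dist p (z i) := not_lt.mp (fun h => hnotin (mem_ball.mpr h))
        have h2 : dist p w < r / 4 := mem_ball.mp hpball
        have h3 : dist p (z i) ≤ dist p w + dist w (z i) := dist_triangle p w (z i)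
        linarith
      refine ⟨fun i => if i = j then w else z i, ?_, ?_⟩
      · intro i i' hi hi' hne'
        by_cases h1 : i = j
        · have h2 : i' ≠ j := by omega
          have hi'j : i' < j := by omega
          simp only [h1, if_pos rfl, if_neg h2]
          exact hkey i' hi'j
        · by_cases h2 : i' = j
          · have hij : i < j := by omega
            simp only [if_neg h1, h2, if_pos rfl]
            rw [dist_comm]
            exact hkey i hij
          · simp only [if_neg h1, if_neg h2]
            exact hsep i i' (by omega) (by omega) hne'
      · intro i hi
        by_cases h1 : i = j
        · simp only [h1, if_pos rfl]
          exact le_trans hw (measure_mono inter_subset_left)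
        · simp only [if_neg h1]
          exact hmass i (by omega)
  obtain ⟨z, hsep, hmass⟩ := main (k + 1) le_rfl
  refine ⟨fun j => ball (z j) (r / 4), fun j => measurableSet_ball, ?_, ?_⟩
  · intro i j hij x hx y hy
    have hzz : r / 4 * 3 ≤ dist (z i) (z j) :=
      hsep i j i.isLt j.isLt (fun h => hij (Fin.ext h))
    have h1 : dist x (z (i : ℕ)) < r / 4 := mem_ball.mp hx
    have h2 : dist y (z (j : ℕ)) < r / 4 := mem_ball.mp hy
    have h3 : dist (z (i : ℕ)) (z (j : ℕ)) ≤
        dist (z (i : ℕ)) x + dist x y + dist y (z (j : ℕ)) := dist_triangle4 _ _ _ _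
    rw [dist_comm (z (i : ℕ)) x] at h3
    have hδr : δ ≤ r / 8 := min_le_right _ _
    linarith
  · intro j
    exact le_trans (ENNReal.ofReal_le_ofReal (min_le_left _ _)) (hmass j j.isLt)
end
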